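/- For any decorated tree T' whose root has a unique child which is an internal node, Π_T(T') is a decorated tree, and there exists a unique integer j with 1 ≤ j ≤ fl(Π_T(T')) such that T' = Δ_T(Π_T(T'), j). -/

import Mathlib

/-- Rooted plane trees with integer labels on the leaves. -/
inductive DTree where
  | leaf : ℤ → DTree
  | node : List DTree → DTree

mutual
/-- The list of leaf labels of a tree, in left-to-right (prefix traversal) order. -/
def leafLabels : DTree → List ℤ
  | .leaf l => [l]
  | .node ts => leafLabelsList ts
def leafLabelsList : List DTree → List ℤ
  | [] => []
  | t :: ts => leafLabels t ++ leafLabelsList ts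
end

/-- The three conditions of decorated trees, for a subtree whose root is at depth `d`:
leaf labels are at least -1 and strictly less than the depth of their parent;
every internal node of positive depth `d` has a descendant leaf labeled at most `d - 2`;
and in any direct subtree of an internal node of depth `d`, a leaf labeled `d` is
preceded in traversal order only by leaves labeled at least `d`. -/
inductive DecoAt : DTree → ℕ → Prop where
  | leaf {l : ℤ} {d : ℕ} (h1 : -1 ≤ l) (h2 : l < (d : ℤ) - 1) : DecoAt (.leaf l) d
  | node {ts : List DTree} {d : ℕ} (hne : ts ≠ [])
      (h2 : 0 < d → ∃ x ∈ leafLabelsList ts, x ≤ (d : ℤ) - 2)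
      (h3 : ∀ t' ∈ ts, ∀ a b, leafLabels t' = a ++ (d : ℤ) :: b → ∀ x ∈ a, (d : ℤ) ≤ x)
      (h4 : ∀ t' ∈ ts, DecoAt t' (d + 1)) : DecoAt (.node ts) d

/-- A decorated tree: the root is at depth 0. -/
def IsDeco (T : DTree) : Prop := DecoAt T 0

/-- The number of free leaves (leaves labeled -1). -/
def fl (T : DTree) : ℕ := (leafLabels T).count (-1)

mutual
/-- Increment leaf labels, where the counter `m` is the number of free leaves (from
the left) that still must be incremented; once it reaches 0, remaining free leaves
are left untouched. Returns the new tree and the remaining counter. -/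
def incUpTo : DTree → ℕ → DTree × ℕ
  | .leaf l, m =>
      if l = -1 then (if 0 < m then (.leaf 0, m - 1) else (.leaf (-1), m))
      else (.leaf (l + 1), m)
  | .node ts, m =>
      let p := incList ts m
      (.node p.1, p.2)
def incList : List DTree → ℕ → List DTree × ℕ
  | [], m => ([], m)
  | t :: ts, m =>
      let p := incUpTo t m
      let q := incList ts p.2
      (p.1 :: q.1, q.2)
end

/-- Δ_T(T,i): attach `T` under a new root vertex and add 1 to every leaf label,
except for the last `i` free leaves (in traversal order). -/
def deltaT (T : DTree) (i : ℕ) : DTree := .node [(incUpTo T (fl T - i)).1]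

mutual
/-- Subtract 1 from every non-free leaf label. -/
def decLeaves : DTree → DTree
  | .leaf l => if l = -1 then .leaf (-1) else .leaf (l - 1)
  | .node ts => .node (decList ts)
def decList : List DTree → List DTree
  | [] => []
  | t :: ts => decLeaves t :: decList ts
end

/-- Π_T: remove the root (which has a unique child) and subtract 1 from every
non-free leaf label. -/
def piT : DTree → DTree
  | .node [t] => decLeaves t
  | t => t

/-! Π_T turns the leaves of T' labeled `0` into free leaves and keeps the free ones. By the third
condition at the root, no free leaf of T' precedes a leaf labeled `0`, so these new free leaves
are the first free leaves of Π_T(T'), and Δ_T(Π_T(T'), fl T') increments exactly them back.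
Conversely Δ_T(T, j) has exactly `j` free leaves, which forces `j = fl T'`; and `fl T' ≥ 1`
because the child of the root has a descendant leaf labeled at most `-1`. -/

def decLabel (l : ℤ) : ℤ := if l = -1 then -1 else l - 1

theorem decLabel_eq_neg_one_iff {l : ℤ} : decLabel l = -1 ↔ l = -1 ∨ l = 0 := by
  unfold decLabel; split_ifs <;> omega

theorem count_neg_one_map_decLabel (L : List ℤ) :
    (L.map decLabel).count (-1) = L.count (-1) + L.count 0 := by
  induction L with
  | nil => rfl
  | cons a L ih =>
    simp only [List.map_cons, List.count_cons, ih, beq_iff_eq, decLabel_eq_neg_one_iff]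
    split_ifs <;> omega

mutual
theorem leafLabels_decLeaves : ∀ t : DTree, leafLabels (decLeaves t) = (leafLabels t).map decLabel
  | .leaf l => by by_cases h : l = -1 <;> simp [decLeaves, leafLabels, decLabel, h]
  | .node ts => leafLabelsList_decList ts
theorem leafLabelsList_decList :
    ∀ ts : List DTree, leafLabelsList (decList ts) = (leafLabelsList ts).map decLabel
  | [] => rfl
  | t :: ts => by
    simp only [decList, leafLabelsList, List.map_append, leafLabels_decLeaves t,
      leafLabelsList_decList ts]
end

theorem decList_eq_map (ts : List DTree) : decList ts = ts.map decLeaves := by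
  induction ts with
  | nil => rfl
  | cons t ts ih => rw [decList, List.map_cons, ih]

theorem fl_decLeaves (t : DTree) : fl (decLeaves t) = fl t + (leafLabels t).count 0 := by
  rw [fl, fl, leafLabels_decLeaves, count_neg_one_map_decLabel]

theorem mem_leafLabelsList {x : ℤ} {ts : List DTree} :
    x ∈ leafLabelsList ts ↔ ∃ t ∈ ts, x ∈ leafLabels t := by
  induction ts with
  | nil => simp [leafLabelsList]
  | cons t ts ih => simp [leafLabelsList, ih]

/-- The third condition on decorated trees, read on the leaf labels of a direct subtree. -/
def GeBefore (p : ℤ) (L : List ℤ) : Prop := ∀ a b, L = a ++ p :: b → ∀ x ∈ a, p ≤ x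

namespace GeBefore

variable {p : ℤ} {A B : List ℤ}

theorem left (h : GeBefore p (A ++ B)) : GeBefore p A := fun a b hab =>
  h a (b ++ B) (by simp [hab])

theorem right (h : GeBefore p (A ++ B)) : GeBefore p B := fun a b hab x hx =>
  h (A ++ a) b (by simp [hab]) x (List.mem_append_right A hx)

theorem le_of_mem_right (h : GeBefore p (A ++ B)) (hp : p ∈ B) : ∀ x ∈ A, p ≤ x := by
  obtain ⟨s, t, rfl⟩ := List.append_of_mem hp
  exact fun x hx => h (A ++ s) t (by simp) x (List.mem_append_left s hx)

theorem map_decLabel {L : List ℤ} (h : GeBefore (p + 1) L) (hp : 0 ≤ p) :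
    GeBefore p (L.map decLabel) := by
  intro a b hab x hx
  obtain ⟨a', rest, rfl, rfl, hrest⟩ := List.map_eq_append_iff.1 hab
  obtain ⟨c, b', rfl, hc, -⟩ := List.map_eq_cons_iff.1 hrest
  have hc' : c = p + 1 := by unfold decLabel at hc; split_ifs at hc <;> omega
  obtain ⟨x', hx', rfl⟩ := List.mem_map.1 hx
  have := h a' b' (by rw [hc']) x' hx'
  unfold decLabel; split_ifs <;> omega

end GeBefore

namespace DecoAt

theorem neg_one_le {t : DTree} {d : ℕ} (h : DecoAt t d) : ∀ x ∈ leafLabels t, -1 ≤ x := by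
  induction h with
  | leaf h1 => simpa [leafLabels] using h1
  | node _ _ _ _ ih =>
    intro x hx
    obtain ⟨t', ht', hx'⟩ := mem_leafLabelsList.1 hx
    exact ih t' ht' x hx'

theorem geBefore {ts : List DTree} {d : ℕ} (h : DecoAt (.node ts) d) {t : DTree} (ht : t ∈ ts) :
    GeBefore d (leafLabels t) := by
  cases h with
  | node _ _ h3 _ => exact h3 t ht

theorem neg_one_mem {ts : List DTree} (h : DecoAt (.node ts) 1) :
    (-1 : ℤ) ∈ leafLabels (.node ts) := by
  have hge := h.neg_one_le
  cases h with
  | node _ h2 _ _ =>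
    obtain ⟨x, hx, hxle⟩ := h2 one_pos
    obtain rfl : x = -1 := le_antisymm (by simpa using hxle) (hge x hx)
    exact hx

theorem decLeaves {t : DTree} {e : ℕ} (h : DecoAt t e) {d : ℕ} (he : e = d + 1)
    (hd : 0 < d ∨ ∃ us, t = .node us) : DecoAt (decLeaves t) d := by
  induction h generalizing d with
  | @leaf l _ h1 h2 =>
    subst he
    obtain hd | ⟨_, ⟨⟩⟩ := hd
    unfold _root_.decLeaves
    split_ifs with hl
    · exact .leaf le_rfl (by omega)
    · exact .leaf (by omega) (by push_cast at h2; omega)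
  | @node ts _ hne h2 h3 _ ih =>
    subst he
    refine .node ?_ ?_ ?_ ?_
    · simpa [decList_eq_map] using hne
    · intro hdpos
      obtain ⟨x, hx, hxle⟩ := h2 (Nat.succ_pos d)
      refine ⟨decLabel x, ?_, ?_⟩
      · rw [leafLabelsList_decList]; exact List.mem_map_of_mem hx
      · unfold decLabel; push_cast at hxle; split_ifs <;> omega
    · intro t' ht'
      rw [decList_eq_map] at ht'
      obtain ⟨t, ht, rfl⟩ := List.mem_map.1 ht'
      rw [leafLabels_decLeaves]
      exact GeBefore.map_decLabel (by exact_mod_cast h3 t ht) (Int.natCast_nonneg d)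
    · intro t' ht'
      rw [decList_eq_map] at ht'
      obtain ⟨t, ht, rfl⟩ := List.mem_map.1 ht'
      exact ih t ht rfl (.inl (Nat.succ_pos d))

end DecoAt

mutual
theorem incUpTo_decLeaves : ∀ (t : DTree) (k : ℕ), GeBefore 0 (leafLabels t) →
    (k = 0 ∨ (-1 : ℤ) ∉ leafLabels t) →
    incUpTo (decLeaves t) ((leafLabels t).count 0 + k) = (t, k)
  | .leaf l, k => fun _ hk => by
    by_cases hl : l = -1
    · subst hl
      obtain rfl : k = 0 := by simpa [leafLabels] using hk
      simp [decLeaves, incUpTo, leafLabels]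
    · by_cases hl0 : l = 0
      · subst hl0
        simp [decLeaves, incUpTo, leafLabels]
      · have : l - 1 ≠ -1 := by omega
        simp [decLeaves, incUpTo, leafLabels, hl, hl0, this]
  | .node us, k => fun h hk => by
    change incUpTo (.node (decList us)) ((leafLabelsList us).count 0 + k) = _
    rw [incUpTo, incList_decList us k h hk]
theorem incList_decList : ∀ (us : List DTree) (k : ℕ), GeBefore 0 (leafLabelsList us) →
    (k = 0 ∨ (-1 : ℤ) ∉ leafLabelsList us) →
    incList (decList us) ((leafLabelsList us).count 0 + k) = (us, k)
  | [], k => fun _ _ => by simp [decList, incList, leafLabelsList]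
  | u :: us, k => fun h hk => by
    change GeBefore 0 (leafLabels u ++ leafLabelsList us) at h
    change k = 0 ∨ (-1 : ℤ) ∉ leafLabels u ++ leafLabelsList us at hk
    have hu : (leafLabelsList us).count 0 + k = 0 ∨ (-1 : ℤ) ∉ leafLabels u := by
      by_cases h0 : (0 : ℤ) ∈ leafLabelsList us
      · exact .inr fun hm => absurd (h.le_of_mem_right h0 (-1) hm) (by norm_num)
      · rcases hk with rfl | hk
        · exact .inl (List.count_eq_zero.2 h0)
        · exact .inr fun hm => hk (List.mem_append_left _ hm)
    have hus : k = 0 ∨ (-1 : ℤ) ∉ leafLabelsList us :=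
      hk.imp_right fun hk hm => hk (List.mem_append_right _ hm)
    change incList (decLeaves u :: decList us)
      ((leafLabels u ++ leafLabelsList us).count 0 + k) = _
    rw [List.count_append, add_assoc, incList, incUpTo_decLeaves u _ h.left hu,
      incList_decList us k h.right hus]
end

mutual
theorem incUpTo_snd_and_fl : ∀ (t : DTree) (m : ℕ), (∀ x ∈ leafLabels t, -1 ≤ x) →
    (incUpTo t m).2 = m - fl t ∧ fl (incUpTo t m).1 = fl t - m
  | .leaf l, m => fun hge => by
    have hl : -1 ≤ l := hge l (List.mem_singleton_self l)
    by_cases hl1 : l = -1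
    · subst hl1
      by_cases hm : 0 < m <;> simp [incUpTo, fl, leafLabels, hm] <;> omega
    · have : l + 1 ≠ -1 := by omega
      simp [incUpTo, fl, leafLabels, hl1, this]
  | .node us, m => fun hge => incList_snd_and_count us m hge
theorem incList_snd_and_count : ∀ (us : List DTree) (m : ℕ), (∀ x ∈ leafLabelsList us, -1 ≤ x) →
    (incList us m).2 = m - (leafLabelsList us).count (-1) ∧
      (leafLabelsList (incList us m).1).count (-1) = (leafLabelsList us).count (-1) - m
  | [], m => fun _ => by simp [incList, leafLabelsList]
  | u :: us, m => fun hge => by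
    obtain ⟨hu₂, hu₁⟩ := incUpTo_snd_and_fl u m fun x hx => hge x (List.mem_append_left _ hx)
    obtain ⟨hus₂, hus₁⟩ := incList_snd_and_count us (incUpTo u m).2
      fun x hx => hge x (List.mem_append_right _ hx)
    simp only [fl] at hu₁ hu₂
    simp only [incList, leafLabelsList, List.count_append, hus₁, hus₂]
    rw [hu₁, hu₂]
    omega
end

theorem deltaT_decLeaves {t : DTree} (h : GeBefore 0 (leafLabels t)) :
    deltaT (decLeaves t) (fl t) = .node [t] := by
  rw [deltaT, fl_decLeaves, Nat.add_sub_cancel_left, ← add_zero ((leafLabels t).count 0),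
    incUpTo_decLeaves t 0 h (.inl rfl)]

theorem fl_eq_of_deltaT_eq {T t : DTree} {j : ℕ} (hT : ∀ x ∈ leafLabels T, -1 ≤ x)
    (hj : j ≤ fl T) (h : deltaT T j = .node [t]) : fl t = j := by
  rw [deltaT, DTree.node.injEq, List.cons.injEq] at h
  rw [← h.1, (incUpTo_snd_and_fl T _ hT).2]
  omega

theorem stmt4 (ts : List DTree) (h : IsDeco (.node [.node ts])) :
    IsDeco (piT (.node [.node ts])) ∧
    ∃! j : ℕ, 1 ≤ j ∧ j ≤ fl (piT (.node [.node ts])) ∧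
      DTree.node [DTree.node ts] = deltaT (piT (.node [.node ts])) j := by
  have hmem : DTree.node ts ∈ [DTree.node ts] := List.mem_singleton_self _
  have hchild : DecoAt (.node ts) 1 := by cases h with | node _ _ _ h4 => exact h4 _ hmem
  have hge : GeBefore 0 (leafLabels (.node ts)) := by exact_mod_cast h.geBefore hmem
  have hpi : IsDeco (piT (.node [.node ts])) := hchild.decLeaves rfl (.inr ⟨ts, rfl⟩)
  refine ⟨hpi, fl (.node ts), ⟨?_, ?_, (deltaT_decLeaves hge).symm⟩, ?_⟩
  · exact List.count_pos_iff.2 hchild.neg_one_mem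
  · exact (fl_decLeaves _).symm ▸ Nat.le_add_right _ _
  · rintro j ⟨-, hj, hdelta⟩
    exact (fl_eq_of_deltaT_eq hpi.neg_one_le hj hdelta.symm).symm
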